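/- (Tightness, Case 2.) Let C and C' be finite sets of clients with |C| = |C'| = n, put m := |C' \ C| and q := C(n−m, k), and assume 1 ≤ m, 1 ≤ k, and k < n − m. Let y, z be distinct labels such that there exists a third label distinct from both, and let a, b be real numbers with 0 ≤ a, 0 ≤ b, a·C(n,k) ≤ C(n,k) − q, and b·C(n,k) ≤ q. Then there exists a function f : Finset Client → Label such that N_y(C, f) = ⌈a·C(n,k)⌉, N_z(C, f) = ⌊b·C(n,k)⌋, N_y(C', f) = 0, N_z(C', f) = ⌊b·C(n,k)⌋ + C(n,k) − q, and in particular N_z(C', f) > N_y(C', f). -/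

import Mathlib

/-!
Split the `k`-subsets of `C` and of `C'` into those of `C ∩ C'` (there are `q` of them, shared
by both families) and the rest (`C(n,k) - q` on each side, disjoint from the other family).
Label `⌈a C(n,k)⌉` private `k`-subsets of `C` by `y`, `⌊b C(n,k)⌋` shared ones together with all
private `k`-subsets of `C'` by `z`, and everything else by a third label. Then `y` never occurs
on `C'`, while `z` occurs `⌊b C(n,k)⌋ + C(n,k) - q > 0` times there, since `q < C(n,k)` for
`m, k ≥ 1`.
-/

open Finset

/-- Label count: number of `k`-element subsets `T` of `S` with `f T = j`. -/
def labelCount {Client Label : Type} [DecidableEq Client] [DecidableEq Label]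
    (k : ℕ) (f : Finset Client → Label) (S : Finset Client) (j : Label) : ℕ :=
  ((S.powersetCard k).filter (fun T => f T = j)).card

theorem Nat.choose_lt_choose_of_lt {m n k : ℕ} (hk : 1 ≤ k) (hkm : k ≤ m) (hmn : m < n) :
    m.choose k < n.choose k := by
  obtain ⟨j, rfl⟩ : ∃ j, k = j + 1 := ⟨k - 1, by omega⟩
  calc m.choose (j + 1) < m.choose j + m.choose (j + 1) :=
        Nat.lt_add_of_pos_left (Nat.choose_pos (by omega))
    _ = (m + 1).choose (j + 1) := (Nat.choose_succ_succ m j).symm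
    _ ≤ n.choose (j + 1) := Nat.choose_le_choose _ hmn

namespace Finset

variable {α : Type*} [DecidableEq α]

theorem powersetCard_inter (k : ℕ) (s t : Finset α) :
    powersetCard k s ∩ powersetCard k t = powersetCard k (s ∩ t) := by
  ext u
  simp only [mem_inter, mem_powersetCard, subset_inter_iff]
  tauto

theorem exists_disjoint_of_le_card_sdiff_of_le_card_inter {P P' : Finset α} {A B : ℕ}
    (hA : A ≤ #(P \ P')) (hB : B ≤ #(P ∩ P')) :
    ∃ Y Z : Finset α, Disjoint Y Z ∧ #(P ∩ Y) = A ∧ #(P ∩ Z) = B ∧ #(P' ∩ Y) = 0 ∧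
      #(P' ∩ Z) = B + #(P' \ P) := by
  obtain ⟨Y, hYP, hYcard⟩ := exists_subset_card_eq hA
  obtain ⟨W, hWPP', hWcard⟩ := exists_subset_card_eq hB
  have hYP' : Disjoint Y P' := disjoint_of_subset_left hYP sdiff_disjoint
  have hWP' : W ⊆ P' := hWPP'.trans inter_subset_right
  have hWsdiff : Disjoint W (P' \ P) :=
    disjoint_of_subset_left (hWPP'.trans inter_subset_left) disjoint_sdiff
  refine ⟨Y, W ∪ (P' \ P), ?_, ?_, ?_, ?_, ?_⟩
  · exact hYP'.mono_right (union_subset hWP' sdiff_subset)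
  · rw [inter_eq_right.mpr (hYP.trans sdiff_subset), hYcard]
  · rw [inter_union_distrib_left, inter_sdiff_self, union_empty,
      inter_eq_right.mpr (hWPP'.trans inter_subset_left), hWcard]
  · rw [disjoint_iff_inter_eq_empty.mp hYP'.symm, card_empty]
  · rw [inter_eq_right.mpr (union_subset hWP' sdiff_subset), card_union_of_disjoint hWsdiff,
      hWcard]

end Finset

theorem exists_fun_eq_iff_mem {β L : Type*} {y z w : L} (hyz : y ≠ z) (hwy : w ≠ y)
    (hwz : w ≠ z) {Y Z : Finset β} (hYZ : Disjoint Y Z) :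
    ∃ f : β → L, (∀ T, f T = y ↔ T ∈ Y) ∧ (∀ T, f T = z ↔ T ∈ Z) := by
  classical
  refine ⟨fun T => if T ∈ Y then y else if T ∈ Z then z else w, fun T => ?_, fun T => ?_⟩
  · by_cases hY : T ∈ Y
    · simp [hY]
    · by_cases hZ : T ∈ Z <;> simp [hY, hZ, hyz.symm, hwy]
  · by_cases hY : T ∈ Y
    · simp [hY, hyz, disjoint_left.mp hYZ hY]
    · by_cases hZ : T ∈ Z <;> simp [hY, hZ, hwz]

theorem labelCount_eq_card_inter {Client Label : Type} [DecidableEq Client] [DecidableEq Label]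
    {k : ℕ} {f : Finset Client → Label} {j : Label} {Y : Finset (Finset Client)}
    (hf : ∀ T, f T = j ↔ T ∈ Y) (S : Finset Client) :
    labelCount k f S j = #(S.powersetCard k ∩ Y) := by
  rw [labelCount, ← filter_mem_eq_inter]
  simp only [hf]

theorem flcertP_tightness_case2
    {Client Label : Type} [DecidableEq Client] [DecidableEq Label]
    (n k : ℕ)
    (C C' : Finset Client) (hC : C.card = n) (hC' : C'.card = n)
    (m : ℕ) (hm : m = (C' \ C).card)
    (q : ℕ) (hq : q = Nat.choose (n - m) k)
    (hm1 : 1 ≤ m) (hk1 : 1 ≤ k) (hknm : k < n - m)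
    (y z : Label) (hyz : y ≠ z) (hthird : ∃ w : Label, w ≠ y ∧ w ≠ z)
    (a b : ℝ) (ha0 : 0 ≤ a) (hb0 : 0 ≤ b)
    (ha : a * (Nat.choose n k : ℝ) ≤ (Nat.choose n k : ℝ) - (q : ℝ))
    (hb : b * (Nat.choose n k : ℝ) ≤ (q : ℝ)) :
    ∃ f : Finset Client → Label,
      (labelCount k f C y : ℤ) = ⌈a * (Nat.choose n k : ℝ)⌉ ∧
      (labelCount k f C z : ℤ) = ⌊b * (Nat.choose n k : ℝ)⌋ ∧
      labelCount k f C' y = 0 ∧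
      (labelCount k f C' z : ℤ)
        = ⌊b * (Nat.choose n k : ℝ)⌋ + (Nat.choose n k : ℤ) - (q : ℤ) ∧
      labelCount k f C' y < labelCount k f C' z := by
  obtain ⟨w, hwy, hwz⟩ := hthird
  set N := n.choose k
  set P := C.powersetCard k
  set P' := C'.powersetCard k
  have hCC' : #(C ∩ C') = n - m := by
    have := card_sdiff_add_card_inter C' C
    rw [inter_comm]
    omega
  have hshared : #(P ∩ P') = q := by rw [powersetCard_inter, card_powersetCard, hCC', hq]
  have hqN : q < N := hq ▸ Nat.choose_lt_choose_of_lt hk1 hknm.le (by omega)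
  have hprivate : #(P \ P') = N - q := by
    rw [card_sdiff, inter_comm, hshared, card_powersetCard, hC]
  have hprivate' : #(P' \ P) = N - q := by rw [card_sdiff, hshared, card_powersetCard, hC']
  obtain ⟨Y, Z, hYZ, hPY, hPZ, hP'Y, hP'Z⟩ :=
    exists_disjoint_of_le_card_sdiff_of_le_card_inter (A := ⌈a * N⌉₊) (B := ⌊b * N⌋₊)
    (hprivate ▸ Nat.ceil_le.mpr (by rwa [Nat.cast_sub hqN.le]))
    (hshared ▸ Nat.floor_le_of_le hb)
  obtain ⟨f, hfy, hfz⟩ := exists_fun_eq_iff_mem hyz hwy hwz hYZ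
  refine ⟨f, ?_, ?_, ?_, ?_, ?_⟩ <;>
    simp only [labelCount_eq_card_inter hfy, labelCount_eq_card_inter hfz]
  · rw [hPY, Int.natCast_ceil_eq_ceil (by positivity)]
  · rw [hPZ, Int.natCast_floor_eq_floor (by positivity)]
  · exact hP'Y
  · rw [hP'Z, hprivate', Nat.cast_add, Nat.cast_sub hqN.le,
      Int.natCast_floor_eq_floor (by positivity)]
    ring
  · rw [hP'Y, hP'Z]
    omega
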